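/- If μ is a probability measure on ℝ^N with ∫ ‖x‖² dμ(x) = 1, then PFP(μ) ≥ 1/n, where n is the number of nonzero eigenvalues of the frame operator S_μ; equality holds if and only if the nonzero eigenvalues of S_μ are all equal to 1/n. -/

import Mathlib

/-!
Both sides are spectral quantities of the frame matrix `S`: expanding the inner product in
coordinates gives `∫ ‖x‖² dμ = tr S = ∑ λₖ` and `PFP(μ) = tr S² = ∑ λₖ²`. If the `n` nonzero
eigenvalues sum to `1`, then `∑ (λₖ - 1/n)² = ∑ λₖ² - 1/n`, which is nonnegative and vanishes
exactly when every nonzero `λₖ` equals `1/n`.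
-/

open MeasureTheory Matrix
open scoped RealInnerProductSpace

namespace Finset

variable {ι : Type*} {s : Finset ι} {f : ι → ℝ}

theorem sum_sq_sub_inv_card (hf : ∑ k ∈ s, f k = 1) :
    ∑ k ∈ s, (f k - 1 / #s) ^ 2 = ∑ k ∈ s, f k ^ 2 - 1 / #s := by
  have hs : (#s : ℝ) ≠ 0 := by
    rintro h
    simp_all [card_eq_zero.mp (by exact_mod_cast h)]
  simp only [sub_sq, sum_add_distrib, sum_sub_distrib, ← sum_mul, ← mul_sum, hf, sum_const,
    nsmul_eq_mul]
  field_simp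
  ring

theorem inv_card_le_sum_sq (hf : ∑ k ∈ s, f k = 1) : 1 / #s ≤ ∑ k ∈ s, f k ^ 2 := by
  have := sum_sq_sub_inv_card hf ▸ sum_nonneg fun k _ => sq_nonneg (f k - 1 / #s)
  linarith

theorem sum_sq_eq_inv_card_iff (hf : ∑ k ∈ s, f k = 1) :
    ∑ k ∈ s, f k ^ 2 = 1 / #s ↔ ∀ k ∈ s, f k = 1 / #s := by
  rw [← sub_eq_zero, ← sum_sq_sub_inv_card hf,
    sum_eq_zero_iff_of_nonneg fun k _ => sq_nonneg (f k - 1 / #s)]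
  simp only [sq_eq_zero_iff, sub_eq_zero]

end Finset

theorem Matrix.IsHermitian.trace_mul_self_eq_sum_sq_eigenvalues {𝕜 n : Type*} [RCLike 𝕜]
    [Fintype n] [DecidableEq n] {A : Matrix n n 𝕜} (hA : A.IsHermitian) :
    (A * A).trace = ∑ i, (hA.eigenvalues i : 𝕜) ^ 2 := by
  conv_lhs => rw [hA.spectral_theorem, ← map_mul, Unitary.conjStarAlgAut_apply,
    trace_mul_cycle, Unitary.coe_star_mul_self, one_mul, diagonal_mul_diagonal, trace_diagonal]
  simp [sq]

variable {ι : Type*}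

noncomputable def frameMatrix (μ : Measure (EuclideanSpace ℝ ι)) : Matrix ι ι ℝ :=
  of fun i j => ∫ x, x i * x j ∂μ

theorem frameMatrix_apply_comm (μ : Measure (EuclideanSpace ℝ ι)) (i j : ι) :
    frameMatrix μ j i = frameMatrix μ i j := by
  simp only [frameMatrix, of_apply, mul_comm]

variable [Fintype ι]

theorem inner_sq_eq_sum_prod (x y : EuclideanSpace ℝ ι) :
    ⟪x, y⟫ ^ 2 = ∑ p : ι × ι, x p.1 * x p.2 * (y p.1 * y p.2) := by
  simp only [PiLp.inner_apply, RCLike.inner_apply, Real.ringHom_apply, sq, Finset.sum_mul_sum,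
    Fintype.sum_prod_type]
  exact Finset.sum_congr rfl fun i _ => Finset.sum_congr rfl fun j _ => by ring

variable {μ : Measure (EuclideanSpace ℝ ι)}

theorem integrable_apply_mul_apply (hμ : Integrable (fun x => ‖x‖ ^ 2) μ) (i j : ι) :
    Integrable (fun x : EuclideanSpace ℝ ι => x i * x j) μ := by
  refine hμ.mono' (by fun_prop) (ae_of_all _ fun x => ?_)
  rw [norm_mul, sq]
  exact mul_le_mul (PiLp.norm_apply_le x i) (PiLp.norm_apply_le x j) (norm_nonneg _)
    (norm_nonneg _)

theorem trace_frameMatrix (hμ : Integrable (fun x => ‖x‖ ^ 2) μ) :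
    (frameMatrix μ).trace = ∫ x, ‖x‖ ^ 2 ∂μ := by
  simp_rw [EuclideanSpace.real_norm_sq_eq, sq]
  rw [integral_finsetSum _ fun i _ => integrable_apply_mul_apply hμ i i]
  rfl

theorem integral_integral_inner_sq (hμ : Integrable (fun x => ‖x‖ ^ 2) μ) :
    ∫ x, ∫ y, ⟪x, y⟫ ^ 2 ∂μ ∂μ = (frameMatrix μ * frameMatrix μ).trace := by
  have hint := integrable_apply_mul_apply hμ
  have inner_integral (x : EuclideanSpace ℝ ι) :
      ∫ y, ⟪x, y⟫ ^ 2 ∂μ = ∑ p : ι × ι, x p.1 * x p.2 * frameMatrix μ p.1 p.2 := by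
    simp only [inner_sq_eq_sum_prod]
    rw [integral_finsetSum _ fun p _ => (hint p.1 p.2).const_mul _]
    simp only [integral_const_mul, frameMatrix, of_apply]
  simp only [inner_integral]
  rw [integral_finsetSum _ fun p _ => (hint p.1 p.2).mul_const _]
  simp only [integral_mul_const, trace, diag, mul_apply, Fintype.sum_prod_type]
  exact Finset.sum_congr rfl fun i _ => Finset.sum_congr rfl fun j _ => by
    rw [frameMatrix_apply_comm μ i j]; rfl

theorem stmt18_general {N : ℕ} (μ : Measure (EuclideanSpace ℝ (Fin N)))
    (hmom : Integrable (fun y : EuclideanSpace ℝ (Fin N) => ‖y‖ ^ 2) μ)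
    (hnorm : ∫ x, ‖x‖ ^ 2 ∂μ = 1)
    (S : Matrix (Fin N) (Fin N) ℝ)
    (hS : ∀ i j, S i j = ∫ x, x i * x j ∂μ)
    (hSherm : S.IsHermitian)
    (n : ℕ)
    (hn : n = (Finset.univ.filter (fun k => hSherm.eigenvalues k ≠ 0)).card) :
    (1 / (n : ℝ)) ≤ ∫ x, ∫ y, ⟪x, y⟫ ^ 2 ∂μ ∂μ ∧
    (∫ x, ∫ y, ⟪x, y⟫ ^ 2 ∂μ ∂μ = 1 / (n : ℝ) ↔
      ∀ k, hSherm.eigenvalues k ≠ 0 → hSherm.eigenvalues k = 1 / (n : ℝ)) := by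
  obtain rfl : S = frameMatrix μ := Matrix.ext fun i j => hS i j
  set T := Finset.univ.filter fun k => hSherm.eigenvalues k ≠ 0
  have hsum : ∑ k ∈ T, hSherm.eigenvalues k = 1 := by
    rw [Finset.sum_filter_ne_zero, ← hnorm, ← trace_frameMatrix hmom,
      hSherm.trace_eq_sum_eigenvalues]
    simp
  have hpfp : ∫ x, ∫ y, ⟪x, y⟫ ^ 2 ∂μ ∂μ = ∑ k ∈ T, hSherm.eigenvalues k ^ 2 := by
    rw [integral_integral_inner_sq hmom, hSherm.trace_mul_self_eq_sum_sq_eigenvalues,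
      Finset.sum_filter_of_ne fun k _ hk => by simpa using hk]
    simp
  subst hn
  rw [hpfp]
  refine ⟨Finset.inv_card_le_sum_sq hsum, (Finset.sum_sq_eq_inv_card_iff hsum).trans ?_⟩
  simp [T]

theorem stmt18 {N : ℕ} (μ : Measure (EuclideanSpace ℝ (Fin N)))
    [IsProbabilityMeasure μ]
    (hmom : Integrable (fun y : EuclideanSpace ℝ (Fin N) => ‖y‖ ^ 2) μ)
    (hnorm : ∫ x, ‖x‖ ^ 2 ∂μ = 1)
    (S : Matrix (Fin N) (Fin N) ℝ)
    (hS : ∀ i j, S i j = ∫ x, x i * x j ∂μ)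
    (hSherm : S.IsHermitian)
    (n : ℕ)
    (hn : n = (Finset.univ.filter (fun k => hSherm.eigenvalues k ≠ 0)).card) :
    (1 / (n : ℝ)) ≤ ∫ x, ∫ y, ⟪x, y⟫ ^ 2 ∂μ ∂μ ∧
    (∫ x, ∫ y, ⟪x, y⟫ ^ 2 ∂μ ∂μ = 1 / (n : ℝ) ↔
      ∀ k, hSherm.eigenvalues k ≠ 0 → hSherm.eigenvalues k = 1 / (n : ℝ)) :=
  stmt18_general μ hmom hnorm S hS hSherm n hn
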